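/- arXiv:1703.00743 — 6 statements merged into one kernel-verified Lean document; each statement's English description precedes it below -/
import Mathlib

section
/- Under the three-term recurrence hypotheses, the derivative expansion coefficients satisfy η_{j,j+2} = (1/(α_j α_{j+1})) · Σ_{i=0}^{j} (β_i − β_{j+1}) for all j ≥ 0. -/
open Polynomial Finset

theorem deriv_coeff_second_subdiag
    (P : ℕ → Polynomial ℝ) (α β γ : ℕ → ℝ) (η : ℕ → ℕ → ℝ)
    (hα : ∀ j, α j ≠ 0)
    (hP0 : P 0 = 1)
    (hdeg : ∀ j, (P j).natDegree = j)
    (hrec0 : X * P 0 = C (α 0) * P 1 + C (β 0) * P 0)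
    (hrec : ∀ j, 1 ≤ j → X * P j =
      C (α j) * P (j + 1) + C (β j) * P j + C (γ j) * P (j - 1))
    (hη : ∀ j, derivative (P j) = ∑ i ∈ Finset.range j, C (η i j) * P i) :
    ∀ j : ℕ, η j (j + 2) =
      (1 / (α j * α (j + 1))) * ∑ i ∈ Finset.range (j + 1), (β i - β (j + 1)) := by
  set a : ℕ → ℝ := fun n => (P n).coeff n with ha
  set b : ℕ → ℝ := fun n => (P (n+1)).coeff n with hb
  have hz : ∀ {i k : ℕ}, i < k → (P i).coeff k = 0 := by
    intro i k h
    exact coeff_eq_zero_of_natDegree_lt (by rw [hdeg]; exact h)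
  have ha0 : a 0 = 1 := by simp [ha, hP0]
  -- a n = α n * a (n+1)
  have harec : ∀ n, a n = α n * a (n + 1) := by
    intro n
    rcases Nat.eq_zero_or_pos n with rfl | hn
    · have := congrArg (fun p => coeff p 1) hrec0
      simpa [coeff_X_mul, coeff_C_mul, hP0, ha] using this
    · have := congrArg (fun p => coeff p (n + 1)) (hrec n hn)
      simpa [coeff_X_mul, coeff_C_mul, hz (by omega : n < n + 1),
        hz (by omega : n - 1 < n + 1), ha] using this
  have hane : ∀ n, a n ≠ 0 := by
    intro n
    rcases Nat.eq_zero_or_pos n with rfl | hn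
    · rw [ha0]; norm_num
    · have hPn : P n ≠ 0 := by
        intro h
        have h2 := hdeg n
        rw [h] at h2
        simp at h2
        omega
      have : a n = (P n).leadingCoeff := by
        rw [ha, Polynomial.leadingCoeff, hdeg]
      rw [this]
      exact leadingCoeff_ne_zero.mpr hPn
  -- b 0 and the b recurrence
  have hb0 : α 0 * b 0 + β 0 * a 0 = 0 := by
    have := congrArg (fun p => coeff p 0) hrec0
    simpa [coeff_X_mul, coeff_C_mul, hb, ha, mul_comm] using this.symm
  have hbrec : ∀ n, α (n+1) * b (n+1) + β (n+1) * a (n+1) = b n := by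
    intro n
    have := congrArg (fun p => coeff p (n + 1)) (hrec (n+1) (by omega))
    simpa [coeff_X_mul, coeff_C_mul, hz (by omega : n < n + 1), ha, hb,
      mul_comm] using this.symm
  -- closed form for b
  have hbform : ∀ n, b n = -(∑ i ∈ Finset.range (n+1), β i) * a (n+1) := by
    intro n
    induction n with
    | zero =>
      have h1 : α 0 * b 0 = α 0 * (-(β 0) * a 1) := by
        have := harec 0
        rw [ha0] at this hb0
        rw [this] at hb0
        ring_nf
        ring_nf at hb0
        linarith
      have := mul_left_cancel₀ (hα 0) h1
      simpa using this
    | succ n ih =>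
      have h1 : α (n+1) * b (n+1) =
          α (n+1) * (-(∑ i ∈ Finset.range (n+2), β i) * a (n+2)) := by
        have h2 := hbrec n
        rw [ih, harec (n+1)] at h2
        rw [Finset.sum_range_succ (f := β) (n := n+1)]
        ring_nf
        ring_nf at h2
        linarith
      exact mul_left_cancel₀ (hα (n+1)) h1
  -- coefficient of the derivative sum
  have hsum : ∀ m k, (∑ i ∈ Finset.range m, C (η i m) * P i).coeff k
      = ∑ i ∈ Finset.range m, η i m * (P i).coeff k := by
    intro m k
    rw [finset_sum_coeff]
    exact Finset.sum_congr rfl fun i _ => coeff_C_mul _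
  -- first subdiagonal of η
  have hη1 : ∀ n, η n (n+1) * a n = (n+1 : ℝ) * a (n+1) := by
    intro n
    have h := congrArg (fun p => coeff p n) (hη (n+1))
    simp only [coeff_derivative] at h
    rw [hsum, Finset.sum_range_succ] at h
    rw [Finset.sum_eq_zero (fun i hi => by
      rw [hz (Finset.mem_range.mp hi)]; ring), zero_add] at h
    rw [← h, ha]; push_cast; ring
  -- second subdiagonal of η
  have hη2 : ∀ n, η n (n+2) * a n + η (n+1) (n+2) * b n = (n+1 : ℝ) * b (n+1) := by
    intro n
    have h := congrArg (fun p => coeff p n) (hη (n+2))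
    simp only [coeff_derivative] at h
    rw [hsum, Finset.sum_range_succ, Finset.sum_range_succ] at h
    rw [Finset.sum_eq_zero (fun i hi => by
      rw [hz (Finset.mem_range.mp hi)]; ring), zero_add] at h
    simpa [ha, hb, mul_comm] using h.symm
  -- final computation
  intro n
  have key : η n (n+2) * a n =
      (∑ i ∈ Finset.range (n+1), (β i - β (n+1))) * a (n+2) := by
    have h2 := hη2 n
    have h1 := hη1 (n+1)
    have hb1 : b n = -(∑ i ∈ Finset.range (n+1), β i) * (α (n+1) * a (n+2)) := by
      rw [hbform n, harec (n+1)]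
    have hb2 : b (n+1) = -(∑ i ∈ Finset.range (n+2), β i) * a (n+2) := hbform (n+1)
    rw [hb1, hb2] at h2
    rw [harec (n+1)] at h1
    -- h1 : η (n+1) (n+2) * (α (n+1) * a (n+2)) = (n+2) * a (n+2)
    have hs2 : (∑ i ∈ Finset.range (n+2), β i)
        = (∑ i ∈ Finset.range (n+1), β i) + β (n+1) := Finset.sum_range_succ _ _
    have hgoal : (∑ i ∈ Finset.range (n+1), (β i - β (n+1)))
        = (∑ i ∈ Finset.range (n+1), β i) - (n+1 : ℝ) * β (n+1) := by
      rw [Finset.sum_sub_distrib, Finset.sum_const, Finset.card_range]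
      push_cast; ring
    rw [hgoal]
    rw [hs2] at h2
    push_cast at h1 h2
    set S := ∑ i ∈ Finset.range (n+1), β i
    linear_combination h2 + S * h1
  have han : a n = α n * α (n+1) * a (n+2) := by
    rw [harec n, harec (n+1)]; ring
  rw [han] at key
  have key2 : η n (n+2) * (α n * α (n+1))
      = ∑ i ∈ Finset.range (n+1), (β i - β (n+1)) :=
    mul_right_cancel₀ (hane (n+2)) (by linear_combination key)
  have e : ∑ i ∈ Finset.range (n+1), (β i - β (n+1))
      = (∑ i ∈ Finset.range (n+1), β i) - (n+1 : ℝ) * β (n+1) := by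
    rw [Finset.sum_sub_distrib, Finset.sum_const, Finset.card_range]
    push_cast; ring
  rw [e] at key2 ⊢
  have hα1 := hα n
  have hα2 := hα (n+1)
  field_simp
  linear_combination key2
end

section
/- For Legendre polynomials, the derivative of P_j equals Σ_{k=0}^{⌊(j−1)/2⌋} (2j − 1 − 4k) P_{j−1−2k} for all j ≥ 1. -/
open Polynomial Finset

theorem legendre_derivative_formula
    (P : ℕ → Polynomial ℝ)
    (hP0 : P 0 = 1) (hP1 : P 1 = X)
    (hrec : ∀ j : ℕ, 1 ≤ j →
      C ((j : ℝ) + 1) * P (j + 1) = C (2 * (j : ℝ) + 1) * X * P j - C (j : ℝ) * P (j - 1)) :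
    ∀ j : ℕ, 1 ≤ j →
      derivative (P j) =
        ∑ k ∈ Finset.range ((j - 1) / 2 + 1),
          C (2 * (j : ℝ) - 1 - 4 * k) * P (j - 1 - 2 * k) := by
  -- Auxiliary identities A(n+1): X P'_{n+1} = (n+1) P_{n+1} + P'_n
  -- and B(n+1): P'_{n+1} = X P'_n + (n+1) P_n, proved jointly by induction.
  have hAB : ∀ n : ℕ,
      (Polynomial.X * derivative (P (n+1)) = C ((n:ℝ)+1) * P (n+1) + derivative (P n)) ∧
      (derivative (P (n+1)) = Polynomial.X * derivative (P n) + C ((n:ℝ)+1) * P n) := by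
    intro n
    induction n with
    | zero => simp [hP0, hP1]
    | succ n ih =>
      obtain ⟨hA, hB⟩ := ih
      have hrn := hrec (n+1) (Nat.le_add_left 1 n)
      push_cast at hrn
      have hdr := congrArg derivative hrn
      simp only [derivative_sub, derivative_mul, derivative_C, derivative_X, zero_mul,
        zero_add, one_mul, mul_one, add_zero] at hdr
      have hc : Polynomial.C ((n:ℝ)+2) ≠ 0 := by
        rw [ne_eq, C_eq_zero]
        positivity
      -- D(n+1): P'_{n+2} = (2n+3) P_{n+1} + P'_n
      have hD : derivative (P (n+2)) = C (2*(n:ℝ)+3) * P (n+1) + derivative (P n) := by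
        have key : Polynomial.C ((n:ℝ)+2) * derivative (P (n+2)) =
            Polynomial.C ((n:ℝ)+2) * (C (2*(n:ℝ)+3) * P (n+1) + derivative (P n)) := by
          simp only [map_add, map_mul, map_sub, map_one, map_ofNat] at hdr hA ⊢
          linear_combination hdr + (2 * Polynomial.C (n:ℝ) + 3) * hA
        exact mul_left_cancel₀ hc key
      constructor
      · -- A(n+2)
        push_cast
        simp only [map_add, map_mul, map_sub, map_one, map_ofNat] at hD hB hrn ⊢
        linear_combination Polynomial.X * hD - hrn - hB
      · -- B(n+2)
        push_cast
        simp only [map_add, map_mul, map_sub, map_one, map_ofNat] at hD hA ⊢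
        linear_combination hD - hA
  -- Derivative recurrence D(n): P'_{n+2} = (2n+3) P_{n+1} + P'_n for all n.
  have hD : ∀ n : ℕ, derivative (P (n+2)) = C (2*(n:ℝ)+3) * P (n+1) + derivative (P n) := by
    intro n
    obtain ⟨hA, _⟩ := hAB n
    have hrn := hrec (n+1) (Nat.le_add_left 1 n)
    push_cast at hrn
    have hdr := congrArg derivative hrn
    simp only [derivative_sub, derivative_mul, derivative_C, derivative_X, zero_mul,
      zero_add, one_mul, mul_one, add_zero] at hdr
    have hc : Polynomial.C ((n:ℝ)+2) ≠ 0 := by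
      rw [ne_eq, C_eq_zero]
      positivity
    have key : Polynomial.C ((n:ℝ)+2) * derivative (P (n+2)) =
        Polynomial.C ((n:ℝ)+2) * (C (2*(n:ℝ)+3) * P (n+1) + derivative (P n)) := by
      simp only [map_add, map_mul, map_sub, map_one, map_ofNat] at hdr hA ⊢
      linear_combination hdr + (2 * Polynomial.C (n:ℝ) + 3) * hA
    exact mul_left_cancel₀ hc key
  -- Main statement by two-step induction.
  have key : ∀ j : ℕ,
      (derivative (P (j+1)) = ∑ k ∈ Finset.range ((j+1-1)/2 + 1),
          C (2 * ((j+1 : ℕ) : ℝ) - 1 - 4 * k) * P (j+1-1-2*k)) ∧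
      (derivative (P (j+2)) = ∑ k ∈ Finset.range ((j+2-1)/2 + 1),
          C (2 * ((j+2 : ℕ) : ℝ) - 1 - 4 * k) * P (j+2-1-2*k)) := by
    intro j
    induction j with
    | zero =>
      constructor
      · simp [hP0, hP1]
        norm_num [map_ofNat]
      · have h2 := hD 0
        simp only [Nat.cast_zero, mul_zero, zero_add] at h2
        simp [hP0, hP1, h2]
        norm_num [map_ofNat]
    | succ n ih =>
      refine ⟨ih.2, ?_⟩
      have hstep := hD (n+1)
      have hrange : (n+1+2-1)/2 + 1 = ((n/2) + 1) + 1 := by omega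
      rw [hrange, Finset.sum_range_succ']
      have hsum : ∑ k ∈ Finset.range (n/2 + 1),
          C (2 * ((n+1+2 : ℕ) : ℝ) - 1 - 4 * ((k+1 : ℕ) : ℝ)) * P (n+1+2-1-2*(k+1)) =
          ∑ k ∈ Finset.range ((n+1-1)/2 + 1),
          C (2 * ((n+1 : ℕ) : ℝ) - 1 - 4 * (k : ℝ)) * P (n+1-1-2*k) := by
        rw [show (n+1-1)/2 + 1 = n/2 + 1 by omega]
        refine Finset.sum_congr rfl fun k hk => ?_
        have : n+1+2-1-2*(k+1) = n+1-1-2*k := by omega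
        rw [this]
        congr 1
        push_cast
        ring
      rw [hsum, ← ih.1, hstep]
      push_cast
      ring
  intro j hj
  rcases j with _ | m
  · omega
  · exact (key m).1
end

section
/- For Bessel polynomials y_j, the derivative satisfies y_j' = (1/2) Σ_{i=0}^{j-1} (2i+1)(−1)^{j+i}(i − j)(i + j + 1) y_i for all j ≥ 1. -/
open Polynomial Finset

noncomputable section BesselAux

def bc (j i : ℕ) : ℝ :=
  (1 / 2) * (2 * (i : ℝ) + 1) * (-1 : ℝ) ^ (j + i) * ((i : ℝ) - (j : ℝ)) * ((i : ℝ) + (j : ℝ) + 1)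

def bg (j i : ℕ) : ℝ := (2 * (j : ℝ) + 3) * bc (j + 1) (i + 1) * (2 * (i : ℝ) + 3)⁻¹

def bB (j m : ℕ) : ℝ := bc j m - (2 * (j : ℝ) + 3) * bc (j + 1) (m + 1) * (2 * (m : ℝ) + 3)⁻¹

lemma la (j i : ℕ) : bc (j + 2) (i + 2) = bg j i + bB j (i + 2) := by
  simp only [bc, bg, bB]
  push_cast
  rw [show (j+2)+(i+2) = (j+i)+2*2 from by omega, show (j+1)+(i+1) = (j+i)+2*1 from by omega,
    show j+(i+2) = (j+i)+2*1 from by omega, show (j+1)+(i+2+1) = (j+i)+2*2 from by omega]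
  simp only [pow_add, pow_mul, neg_one_sq, one_pow, mul_one]
  have h1 : (2*(i:ℝ)+3) ≠ 0 := by positivity
  have h2 : (2*((i:ℝ)+2)+3) ≠ 0 := by positivity
  field_simp
  ring

lemma lb (j : ℕ) : bB j (j + 1) = 2 * (j : ℝ) + 3 := by
  simp only [bB, bc]
  push_cast
  rw [show j+(j+1) = 2*j+1 from by omega, show (j+1)+(j+1+1) = 2*j+3 from by omega]
  rw [show 2*j+3 = 2*(j+1)+1 from by omega]
  simp only [pow_add, pow_mul, neg_one_sq, one_pow, pow_one]
  have h1 : (2*((j:ℝ)+1)+3) ≠ 0 := by positivity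
  field_simp
  ring

lemma lc (j : ℕ) : bB j j = 0 := by
  simp only [bB, bc]
  push_cast
  ring

lemma ld (j : ℕ) : bc (j + 2) 1 = (2 * (j : ℝ) + 3) * bc (j + 1) 0 + bB j 1 := by
  simp only [bB, bc]
  push_cast
  rw [show (j+2)+1 = j+3 from by omega, show (j+1)+0 = j+1 from by omega,
    show (j+1)+(1+1) = j+3 from by omega]
  simp only [pow_add]
  norm_num
  ring

lemma le' (j : ℕ) : bc (j + 2) 0 = bB j 0 - (2 * (j : ℝ) + 3) * bc (j + 1) 0 := by
  simp only [bB, bc]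
  push_cast
  rw [show (j+2)+0 = j+2 from by omega, show j+0 = j+0 from rfl,
    show (j+1)+(0+1) = j+2 from by omega, show (j+1)+0 = j+1 from by omega]
  simp only [pow_add]
  norm_num
  ring


lemma bessel_step (y : ℕ → Polynomial ℝ)
    (hy0 : y 0 = 1) (hy1 : y 1 = 1 + X)
    (hrec : ∀ j : ℕ, 1 ≤ j →
      y (j + 1) = C (2 * (j : ℝ) + 1) * X * y j + y (j - 1))
    (j : ℕ)
    (h1 : derivative (y j) = ∑ i ∈ range j, C (bc j i) * y i)
    (h2 : derivative (y (j + 1)) = ∑ i ∈ range (j + 1), C (bc (j + 1) i) * y i) :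
    derivative (y (j + 2)) = ∑ i ∈ range (j + 2), C (bc (j + 2) i) * y i := by
  have hnn : ∀ n : ℕ, n + 1 + 1 = n + 2 := fun n => rfl
  -- X * y (i+1) in terms of y (i+2), y i
  have hXy : ∀ i : ℕ, X * y (i + 1) = C ((2 * (i : ℝ) + 3)⁻¹) * (y (i + 2) - y i) := by
    intro i
    have hne : (2 * (i : ℝ) + 3) ≠ 0 := by positivity
    have h := hrec (i + 1) (Nat.le_add_left 1 i)
    simp only [Nat.add_sub_cancel] at h
    have h2' : y (i + 2) - y i = C (2 * (i : ℝ) + 3) * (X * y (i + 1)) := by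
      rw [show i + 2 = i + 1 + 1 from rfl, h]
      push_cast
      ring_nf
    rw [h2', ← mul_assoc, ← C_mul, inv_mul_cancel₀ hne, C_1, one_mul]
  have hXy0 : X * y 0 = y 1 - y 0 := by rw [hy0, hy1]; ring
  -- derivative recurrence
  have hrec2 := hrec (j + 1) (Nat.le_add_left 1 j)
  simp only [Nat.add_sub_cancel] at hrec2
  rw [show ((2 : ℝ) * ((j : ℕ) + 1 : ℕ) + 1) = 2 * (j : ℝ) + 3 from by push_cast; ring] at hrec2
  have hd : derivative (y (j + 2)) = C (2 * (j : ℝ) + 3) * y (j + 1)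
      + C (2 * (j : ℝ) + 3) * X * derivative (y (j + 1)) + derivative (y j) := by
    rw [show j + 2 = j + 1 + 1 from rfl, hrec2]
    simp only [derivative_add, derivative_mul, derivative_C, derivative_X]
    ring
  rw [hd, h1, h2]
  -- middle term
  have hmid : C (2 * (j : ℝ) + 3) * X * (∑ i ∈ range (j + 1), C (bc (j + 1) i) * y i)
      = ((∑ i ∈ range j, C (bg j i) * y (i + 2)) - ∑ i ∈ range j, C (bg j i) * y i)
        + C ((2 * (j : ℝ) + 3) * bc (j + 1) 0) * (y 1 - y 0) := by
    rw [Finset.mul_sum, Finset.sum_range_succ']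
    congr 1
    · rw [← Finset.sum_sub_distrib]
      refine Finset.sum_congr rfl fun i _ => ?_
      calc C (2 * (j : ℝ) + 3) * X * (C (bc (j + 1) (i + 1)) * y (i + 1))
          = C (2 * (j : ℝ) + 3) * C (bc (j + 1) (i + 1)) * (X * y (i + 1)) := by ring
        _ = C (2 * (j : ℝ) + 3) * C (bc (j + 1) (i + 1))
              * (C ((2 * (i : ℝ) + 3)⁻¹) * (y (i + 2) - y i)) := by rw [hXy i]
        _ = C (bg j i) * y (i + 2) - C (bg j i) * y i := by
              simp only [bg, C_mul]; ring
    · calc C (2 * (j : ℝ) + 3) * X * (C (bc (j + 1) 0) * y 0)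
          = C (2 * (j : ℝ) + 3) * C (bc (j + 1) 0) * (X * y 0) := by ring
        _ = C (2 * (j : ℝ) + 3) * C (bc (j + 1) 0) * (y 1 - y 0) := by rw [hXy0]
        _ = C ((2 * (j : ℝ) + 3) * bc (j + 1) 0) * (y 1 - y 0) := by rw [C_mul]
  rw [hmid]
  -- split old sum
  have hsplit : (∑ i ∈ range j, C (bc j i) * y i)
      = (∑ i ∈ range j, C (bg j i) * y i) + ∑ i ∈ range j, C (bB j i) * y i := by
    rw [← Finset.sum_add_distrib]
    refine Finset.sum_congr rfl fun i _ => ?_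
    rw [show bc j i = bg j i + bB j i from by simp only [bB, bg]; ring, C_add, add_mul]
  rw [hsplit]
  -- peel LHS
  rw [show j + 2 = j + 1 + 1 from rfl, Finset.sum_range_succ' _ (j + 1),
    Finset.sum_range_succ' _ j]
  simp only [hnn, Nat.zero_add]
  -- expand bc (j+2) (i+2)
  have hF1 : (∑ i ∈ range j, C (bc (j + 2) (i + 2)) * y (i + 2))
      = (∑ i ∈ range j, C (bg j i) * y (i + 2)) + ∑ i ∈ range j, C (bB j (i + 2)) * y (i + 2) := by
    rw [← Finset.sum_add_distrib]
    refine Finset.sum_congr rfl fun i _ => ?_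
    rw [la, C_add]; ring
  rw [hF1]
  -- telescope key
  have t1 : (∑ i ∈ range (j + 2), C (bB j i) * y i)
      = (∑ i ∈ range j, C (bB j (i + 2)) * y (i + 2)) + C (bB j 1) * y 1 + C (bB j 0) * y 0 := by
    rw [show j + 2 = j + 1 + 1 from rfl, Finset.sum_range_succ' _ (j + 1),
      Finset.sum_range_succ' _ j]
  have t2 : (∑ i ∈ range (j + 2), C (bB j i) * y i)
      = (∑ i ∈ range j, C (bB j i) * y i) + C (bB j (j + 1)) * y (j + 1) + C (bB j j) * y j := by
    rw [show j + 2 = j + 1 + 1 from rfl, Finset.sum_range_succ, Finset.sum_range_succ]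
    ring
  have key : (∑ i ∈ range j, C (bB j (i + 2)) * y (i + 2)) + C (bB j 1) * y 1 + C (bB j 0) * y 0
      = (∑ i ∈ range j, C (bB j i) * y i) + C (2 * (j : ℝ) + 3) * y (j + 1) := by
    rw [← t1, t2, lb, lc, C_0]
    ring
  rw [show (C (bc (j + 2) 1) : Polynomial ℝ)
      = C ((2 * (j : ℝ) + 3) * bc (j + 1) 0) + C (bB j 1) from by rw [← C_add, ← ld],
    show (C (bc (j + 2) 0) : Polynomial ℝ)
      = C (bB j 0) - C ((2 * (j : ℝ) + 3) * bc (j + 1) 0) from by rw [← C_sub, ← le']]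
  linear_combination -key

end BesselAux

theorem bessel_derivative_formula
    (y : ℕ → Polynomial ℝ)
    (hy0 : y 0 = 1) (hy1 : y 1 = 1 + X)
    (hrec : ∀ j : ℕ, 1 ≤ j →
      y (j + 1) = C (2 * (j : ℝ) + 1) * X * y j + y (j - 1)) :
    ∀ j : ℕ, 1 ≤ j →
      derivative (y j) =
        ∑ i ∈ Finset.range j,
          C ((1 / 2) * (2 * (i : ℝ) + 1) * (-1 : ℝ) ^ (j + i) * ((i : ℝ) - j) * ((i : ℝ) + j + 1)) * y i := by
  have P0 : derivative (y 0) = ∑ i ∈ range 0, C (bc 0 i) * y i := by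
    rw [hy0]; simp
  have P1 : derivative (y 1) = ∑ i ∈ range 1, C (bc 1 i) * y i := by
    rw [hy1, Finset.sum_range_one, hy0]
    norm_num [bc]
  have main : ∀ n : ℕ, derivative (y n) = ∑ i ∈ range n, C (bc n i) * y i ∧
      derivative (y (n + 1)) = ∑ i ∈ range (n + 1), C (bc (n + 1) i) * y i := by
    intro n
    induction n with
    | zero => exact ⟨P0, P1⟩
    | succ k ih => exact ⟨ih.2, bessel_step y hy0 hy1 hrec k ih.1 ih.2⟩
  intro j _
  exact (main j).1
end

section
/- With the three-term recurrence hypotheses, let η_{i,j} be the derivative coefficients and define θ_{j+1,j} = α_j/(j+1) and, descending for i = j−1, ..., 0, θ_{i+1,j} = −(α_i/(i+1)) Σ_{k=i+2}^{j+1} η_{i,k} θ_{k,j}. Then the polynomial F_j = Σ_{i=1}^{j+1} θ_{i,j} P_i satisfies F_j' = P_j, i.e., F_j is a primitive of P_j. -/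
open Polynomial Finset

theorem primitive_coeff_recurrence
    (P : ℕ → Polynomial ℝ) (α β γ : ℕ → ℝ) (η θ : ℕ → ℕ → ℝ)
    (hα : ∀ j, α j ≠ 0)
    (hP0 : P 0 = 1)
    (hdeg : ∀ j, (P j).natDegree = j)
    (hrec0 : X * P 0 = C (α 0) * P 1 + C (β 0) * P 0)
    (hrec : ∀ j, 1 ≤ j → X * P j =
      C (α j) * P (j + 1) + C (β j) * P j + C (γ j) * P (j - 1))
    (hη : ∀ j, derivative (P j) = ∑ i ∈ Finset.range j, C (η i j) * P i)
    (hη0 : ∀ i j : ℕ, j ≤ i → η i j = 0)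
    (hθtop : ∀ j : ℕ, θ (j + 1) j = α j / ((j : ℝ) + 1))
    (hθrec : ∀ j : ℕ, ∀ i : ℕ, i < j →
      θ (i + 1) j = -(α i / ((i : ℝ) + 1)) * ∑ k ∈ Finset.Icc (i + 2) (j + 1), η i k * θ k j) :
    ∀ j : ℕ,
      derivative (∑ i ∈ Finset.Icc 1 (j + 1), C (θ i j) * P i) = P j := by
  -- P j ≠ 0
  have hPne : ∀ j, P j ≠ 0 := by
    intro j
    cases j with
    | zero => rw [hP0]; exact one_ne_zero
    | succ n =>
      intro h
      have := hdeg (n + 1)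
      rw [h] at this
      simp at this
  -- leading coefficient nonzero
  have hlead : ∀ j, (P j).coeff j ≠ 0 := by
    intro j
    have h1 : (P j).coeff (P j).natDegree = (P j).leadingCoeff := coeff_natDegree
    rw [hdeg j] at h1
    rw [h1]
    exact leadingCoeff_ne_zero.mpr (hPne j)
  -- leading coefficient recurrence
  have hleadrec : ∀ j, α j * (P (j + 1)).coeff (j + 1) = (P j).coeff j := by
    intro j
    rcases Nat.eq_zero_or_pos j with hj | hj
    · subst hj
      have := congrArg (fun p => Polynomial.coeff p 1) hrec0
      simp only [coeff_add, coeff_C_mul, coeff_X_mul] at this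
      have h0 : (P 0).coeff 1 = 0 := by
        apply coeff_eq_zero_of_natDegree_lt
        rw [hdeg 0]; norm_num
      rw [h0, mul_zero, add_zero] at this
      linarith
    · have := congrArg (fun p => Polynomial.coeff p (j + 1)) (hrec j hj)
      simp only [coeff_add, coeff_C_mul, coeff_X_mul] at this
      have h0 : (P j).coeff (j + 1) = 0 := by
        apply coeff_eq_zero_of_natDegree_lt
        rw [hdeg j]; omega
      have h1 : (P (j - 1)).coeff (j + 1) = 0 := by
        apply coeff_eq_zero_of_natDegree_lt
        rw [hdeg (j - 1)]; omega
      rw [h0, h1, mul_zero, mul_zero, add_zero, add_zero] at this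
      linarith
  -- top η coefficient
  have hηtop : ∀ j, η j (j + 1) * (P j).coeff j = ((j : ℝ) + 1) * (P (j + 1)).coeff (j + 1) := by
    intro j
    have := congrArg (fun p => Polynomial.coeff p j) (hη (j + 1))
    simp only [coeff_derivative, finset_sum_coeff, coeff_C_mul] at this
    rw [Finset.sum_range_succ] at this
    have hz : ∀ i ∈ Finset.range j, η i (j + 1) * (P i).coeff j = 0 := by
      intro i hi
      rw [Finset.mem_range] at hi
      have : (P i).coeff j = 0 := by
        apply coeff_eq_zero_of_natDegree_lt
        rw [hdeg i]; omega
      rw [this, mul_zero]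
    rw [Finset.sum_eq_zero hz, zero_add] at this
    push_cast at this
    linarith
  -- key identity: η j (j+1) * α j = j + 1
  have hkey : ∀ j, η j (j + 1) * α j = (j : ℝ) + 1 := by
    intro j
    have h1 := hηtop j
    have h2 := hleadrec j
    have h3 := hlead (j + 1)
    have : η j (j + 1) * α j * (P (j + 1)).coeff (j + 1)
        = ((j : ℝ) + 1) * (P (j + 1)).coeff (j + 1) := by
      calc η j (j + 1) * α j * (P (j + 1)).coeff (j + 1)
          = η j (j + 1) * (α j * (P (j + 1)).coeff (j + 1)) := by ring
        _ = η j (j + 1) * (P j).coeff j := by rw [h2]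
        _ = ((j : ℝ) + 1) * (P (j + 1)).coeff (j + 1) := h1
    exact mul_right_cancel₀ h3 this
  -- main proof
  intro j
  have hj1 : ((j : ℝ) + 1) ≠ 0 := by positivity
  -- the coefficient sums
  have hcoef : ∀ m, m < j + 1 →
      (∑ i ∈ Finset.Icc (m + 1) (j + 1), η m i * θ i j) = if m = j then 1 else 0 := by
    intro m hm
    rcases eq_or_ne m j with hmj | hmj
    · subst hmj
      rw [if_pos rfl, Finset.Icc_self, Finset.sum_singleton, hθtop m]
      rw [mul_div_assoc'] at *
      rw [hkey m]
      exact div_self hj1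
    · rw [if_neg hmj]
      have hmlt : m < j := by omega
      have hm1 : ((m : ℝ) + 1) ≠ 0 := by positivity
      set S := ∑ i ∈ Finset.Icc (m + 2) (j + 1), η m i * θ i j with hS
      have hsplit : Finset.Icc (m + 1) (j + 1) = insert (m + 1) (Finset.Icc (m + 2) (j + 1)) := by
        ext x
        simp only [Finset.mem_Icc, Finset.mem_insert]
        omega
      have hnotmem : (m + 1) ∉ Finset.Icc (m + 2) (j + 1) := by
        simp only [Finset.mem_Icc]; omega
      rw [hsplit, Finset.sum_insert hnotmem, hθrec j m hmlt, ← hS]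
      have hone : η m (m + 1) * (α m / ((m : ℝ) + 1)) = 1 := by
        rw [mul_div_assoc', hkey m]
        exact div_self hm1
      calc η m (m + 1) * (-(α m / ((m : ℝ) + 1)) * S) + S
          = -(η m (m + 1) * (α m / ((m : ℝ) + 1))) * S + S := by ring
        _ = 0 := by rw [hone]; ring
  calc derivative (∑ i ∈ Finset.Icc 1 (j + 1), C (θ i j) * P i)
      = ∑ i ∈ Finset.Icc 1 (j + 1), ∑ m ∈ Finset.range i, C (θ i j * η m i) * P m := by
        rw [derivative_sum]
        refine Finset.sum_congr rfl fun i hi => ?_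
        rw [derivative_C_mul, hη i, Finset.mul_sum]
        refine Finset.sum_congr rfl fun m hm => ?_
        rw [C_mul]; ring
    _ = ∑ i ∈ Finset.Icc 1 (j + 1), ∑ m ∈ Finset.range (j + 1), C (θ i j * η m i) * P m := by
        refine Finset.sum_congr rfl fun i hi => ?_
        refine Finset.sum_subset ?_ ?_
        · intro m hm
          simp only [Finset.mem_range] at hm ⊢
          simp only [Finset.mem_Icc] at hi
          omega
        · intro m hm hm'
          simp only [Finset.mem_range] at hm hm'
          rw [hη0 m i (by omega), mul_zero, map_zero, zero_mul]
    _ = ∑ m ∈ Finset.range (j + 1), ∑ i ∈ Finset.Icc 1 (j + 1), C (θ i j * η m i) * P m :=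
        Finset.sum_comm
    _ = ∑ m ∈ Finset.range (j + 1),
          C (∑ i ∈ Finset.Icc (m + 1) (j + 1), η m i * θ i j) * P m := by
        refine Finset.sum_congr rfl fun m hm => ?_
        rw [← Finset.sum_mul, ← map_sum]
        congr 2
        have hsub : Finset.Icc (m + 1) (j + 1) ⊆ Finset.Icc 1 (j + 1) := by
          intro i hi
          simp only [Finset.mem_Icc] at hi ⊢
          omega
        have hvan : ∀ i ∈ Finset.Icc 1 (j + 1), i ∉ Finset.Icc (m + 1) (j + 1) →
            θ i j * η m i = 0 := by
          intro i hi hi'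
          simp only [Finset.mem_Icc] at hi hi'
          rw [hη0 m i (by omega), mul_zero]
        rw [← Finset.sum_subset hsub hvan]
        exact Finset.sum_congr rfl fun i hi => mul_comm _ _
    _ = P j := by
        rw [Finset.sum_congr rfl (fun m hm => by
          rw [hcoef m (Finset.mem_range.mp hm)])]
        rw [Finset.sum_eq_single j]
        · simp
        · intro m hm hmj
          rw [if_neg hmj]; simp
        · intro h
          exact absurd (Finset.self_mem_range_succ j) h
end

section
/- Under the three-term recurrence hypotheses, the diagonal primitive coefficient satisfies θ_{j,j} = (1/(j+1))(β_j − (1/j) Σ_{i=0}^{j-1} β_i) for all j ≥ 1, where θ_{i,j} are the coefficients of the primitive expansion ∫P_j = Σ_{i=1}^{j+1} θ_{i,j} P_i. -/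
open Polynomial Finset

theorem primitive_coeff_diagonal
    (P : ℕ → Polynomial ℝ) (α β γ : ℕ → ℝ) (θ : ℕ → ℕ → ℝ)
    (hα : ∀ j, α j ≠ 0)
    (hP0 : P 0 = 1)
    (hdeg : ∀ j, (P j).natDegree = j)
    (hrec0 : X * P 0 = C (α 0) * P 1 + C (β 0) * P 0)
    (hrec : ∀ j, 1 ≤ j → X * P j =
      C (α j) * P (j + 1) + C (β j) * P j + C (γ j) * P (j - 1))
    (hθ : ∀ j : ℕ, derivative (∑ i ∈ Finset.Icc 1 (j + 1), C (θ i j) * P i) = P j) :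
    ∀ j : ℕ, 1 ≤ j →
      θ j j = (1 / ((j : ℝ) + 1)) * (β j - (1 / (j : ℝ)) * ∑ i ∈ Finset.range j, β i) := by
  have hPne : ∀ j, P j ≠ 0 := by
    intro j h
    rcases Nat.eq_zero_or_pos j with h0 | h1
    · rw [h0, hP0] at h; exact one_ne_zero h
    · have := hdeg j
      rw [h, natDegree_zero] at this
      omega
  set k : ℕ → ℝ := fun j => (P j).coeff j with hk
  have hkne : ∀ j, k j ≠ 0 := by
    intro j
    have : k j = (P j).leadingCoeff := by rw [leadingCoeff, hdeg]
    rw [this]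
    exact leadingCoeff_ne_zero.mpr (hPne j)
  have hzero : ∀ i n, i < n → (P i).coeff n = 0 := by
    intro i n h
    exact coeff_eq_zero_of_natDegree_lt (by rw [hdeg]; exact h)
  -- leading coefficient recurrence
  have hk_rec : ∀ j, k j = α j * k (j + 1) := by
    intro j
    rcases Nat.eq_zero_or_pos j with h0 | h1
    · subst h0
      have hk0 : k 0 = 1 := by simp [hk, hP0]
      have h := congrArg (fun p => coeff p 1) hrec0
      rw [hP0] at h
      simp only [coeff_add, coeff_C_mul, mul_one, coeff_X_mul, coeff_one] at h
      rw [hk0]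
      simpa [hk, coeff_one] using h
    · have h := congrArg (fun p => coeff p (j + 1)) (hrec j h1)
      simp only [coeff_add, coeff_C_mul, coeff_X_mul] at h
      rw [hzero j (j+1) (by omega), hzero (j-1) (j+1) (by omega)] at h
      simpa [hk] using h
  -- subleading coefficient formula
  have claimC : ∀ j, 1 ≤ j → (P j).coeff (j - 1) = -(∑ i ∈ range j, β i) * k j := by
    intro j hj
    induction j, hj using Nat.le_induction with
    | base =>
      have h0 : (0:ℝ) = α 0 * (P 1).coeff 0 + β 0 * 1 := by
        have h := congrArg (fun p => coeff p 0) hrec0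
        simp only [coeff_add, coeff_C_mul] at h
        rw [hP0] at h
        simpa using h
      have h1 : (1:ℝ) = α 0 * k 1 := by
        have := hk_rec 0
        simpa [hk, hP0] using this
      have key : α 0 * ((P 1).coeff 0) = α 0 * (-β 0 * k 1) := by
        linear_combination -h0 - β 0 * h1
      have := mul_left_cancel₀ (hα 0) key
      simpa using this
    | succ j hj ih =>
      obtain ⟨m, rfl⟩ : ∃ m, j = m + 1 := ⟨j - 1, by omega⟩
      set n := m + 1 with hn
      have hEq : (P n).coeff (n - 1) =
          α n * (P (n+1)).coeff n + β n * k n + γ n * (P (n-1)).coeff n := by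
        have h := congrArg (fun p => coeff p n) (hrec n (by omega))
        simp only [coeff_add, coeff_C_mul] at h
        have hx : (X * P n).coeff n = (P n).coeff (n - 1) := by
          rw [hn]
          simp [coeff_X_mul]
        rw [hx] at h
        exact h
      rw [hzero (n-1) n (by omega)] at hEq
      rw [ih] at hEq
      have hEq2 : α n * (P (n+1)).coeff n = -((∑ i ∈ range (n+1), β i) * k n) := by
        rw [Finset.sum_range_succ]
        linarith [hEq]
      have hkr := hk_rec n
      have hidx : (n+1) - 1 = n := by omega
      rw [hidx]
      have key : α n * ((P (n+1)).coeff n) =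
          α n * (-(∑ i ∈ range (n+1), β i) * k (n+1)) := by
        linear_combination hEq2 - (∑ i ∈ range (n+1), β i) * hkr
      exact mul_left_cancel₀ (hα n) key
  -- now extract θ relations
  intro j hj
  obtain ⟨m, rfl⟩ : ∃ m, j = m + 1 := ⟨j - 1, by omega⟩
  set n := m + 1 with hn
  set Q : Polynomial ℝ := ∑ i ∈ Finset.Icc 1 (n + 1), C (θ i n) * P i with hQ
  have hder := hθ n
  have hQtop : Q.coeff (n + 1) = θ (n+1) n * k (n+1) := by
    rw [hQ, finset_sum_coeff]
    rw [Finset.sum_eq_single (n+1)]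
    · simp [coeff_C_mul, hk]
    · intro i hi hne
      simp only [Finset.mem_Icc] at hi
      rw [coeff_C_mul, hzero i (n+1) (by omega), mul_zero]
    · intro h
      exact absurd (by simp [Finset.mem_Icc]) h
  have hQsub : Q.coeff n = θ n n * k n + θ (n+1) n * (P (n+1)).coeff n := by
    rw [hQ, finset_sum_coeff]
    have hsub : ({n, n+1} : Finset ℕ) ⊆ Finset.Icc 1 (n+1) := by
      intro x hx
      simp only [Finset.mem_insert, Finset.mem_singleton] at hx
      simp only [Finset.mem_Icc]
      omega
    rw [← Finset.sum_subset hsub]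
    · rw [Finset.sum_pair (by omega : n ≠ n + 1)]
      simp [coeff_C_mul, hk]
    · intro i hi hni
      simp only [Finset.mem_insert, Finset.mem_singleton] at hni
      simp only [Finset.mem_Icc] at hi
      rw [coeff_C_mul, hzero i n (by omega), mul_zero]
  have hnne : (n:ℝ) ≠ 0 := Nat.cast_ne_zero.mpr (by omega)
  have hn1ne : (n:ℝ) + 1 ≠ 0 := by positivity
  have E1 : θ (n+1) n * k (n+1) * ((n:ℝ) + 1) = k n := by
    have h := congrArg (fun p => coeff p n) hder
    simp only [coeff_derivative] at h
    rw [hQtop] at h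
    simpa [hk] using h
  have E2 : Q.coeff n * (n:ℝ) = (P n).coeff (n - 1) := by
    have h := congrArg (fun p => coeff p (n - 1)) hder
    simp only [coeff_derivative] at h
    have h1 : n - 1 + 1 = n := by omega
    rw [h1] at h
    have h2 : ((n - 1 : ℕ) : ℝ) + 1 = (n : ℝ) := by
      have hge : (1:ℕ) ≤ n := by omega
      push_cast [Nat.cast_sub hge]
      ring
    rw [h2] at h
    exact h
  have hcn := claimC n (by omega)
  have hcn1 := claimC (n+1) (by omega)
  have hsucc : (P (n+1)).coeff n = -(∑ i ∈ range (n+1), β i) * k (n+1) := by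
    have hidx : (n+1) - 1 = n := by omega
    rw [← hidx]; exact hcn1
  have hS : ∑ i ∈ range (n+1), β i = (∑ i ∈ range n, β i) + β n :=
    Finset.sum_range_succ _ _
  rw [hQsub, hcn, hsucc, hS] at E2
  have hTK : θ (n+1) n * k (n+1) = k n / ((n:ℝ) + 1) := (eq_div_iff hn1ne).mpr E1
  have E2' : θ n n * k n * (n:ℝ)
      - ((∑ i ∈ range n, β i) + β n) * (k n / ((n:ℝ) + 1)) * (n:ℝ)
      = -(∑ i ∈ range n, β i) * k n := by
    linear_combination E2 + (((∑ i ∈ range n, β i) + β n) * (n:ℝ)) * hTK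
  have key : θ n n * (n:ℝ) - ((∑ i ∈ range n, β i) + β n) * (n:ℝ) / ((n:ℝ) + 1)
      = -(∑ i ∈ range n, β i) := by
    apply mul_right_cancel₀ (hkne n)
    linear_combination E2'
  field_simp at key ⊢
  linear_combination key
end

section
/- For Jacobi polynomials P_j^{(α,β)} with γ = α+β and recurrence coefficients α_j = 2(j+1)(j+γ+1)/((2j+γ+1)(2j+γ+2)), β_j = (β²−α²)/((2j+γ)(2j+γ+2)), the partial sum identity Σ_{i=0}^{j-1} β_i = (β−α)·j/(2j+γ) holds for all j ≥ 1, and consequently the derivative coefficient η_{j-1,j+1} = ((2j+γ)² − 1)/(2(j+γ)(j+γ+1)) · (β−α). -/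
open Polynomial Finset

set_option maxHeartbeats 1600000

private lemma jacobi_aux (a b x : ℝ)
    (h1 : 2*x + (a + b) + 1 ≠ 0) (h2 : 2*x + (a + b) + 2 ≠ 0) (h3 : 2*x + (a + b) + 3 ≠ 0)
    (h4 : 2*x + (a + b) + 4 ≠ 0) (g1 : x + (a + b) + 1 ≠ 0) (g2 : x + (a + b) + 2 ≠ 0)
    (m1 : x + 1 ≠ 0) (m2 : x + 2 ≠ 0) :
    ((b - a) * (x+1) / (2*(x+1) + (a+b)) -
        (x+1) * ((b^2 - a^2) / ((2*(x+1) + (a+b)) * (2*(x+1) + (a+b) + 2)))) /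
      ((2*(x+1)*(x+(a+b)+1) / ((2*x+(a+b)+1)*(2*x+(a+b)+2))) *
       (2*((x+1)+1)*((x+1)+(a+b)+1) / ((2*(x+1)+(a+b)+1)*(2*(x+1)+(a+b)+2)))) =
    ((2*(x+1)+(a+b))^2 - 1) / (2*((x+1)+(a+b))*((x+1)+(a+b)+1)) * (b - a) := by
  have e2 : 2*(x+1) + (a+b) ≠ 0 := by intro h; exact h2 (by linarith)
  have e3 : 2*(x+1) + (a+b) + 1 ≠ 0 := by intro h; exact h3 (by linarith)
  have e4 : 2*(x+1) + (a+b) + 2 ≠ 0 := by intro h; exact h4 (by linarith)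
  have p1 : (2*(x+1) + (a+b)) * (2*(x+1) + (a+b) + 2) ≠ 0 := mul_ne_zero e2 e4
  have q1 : (2*x+(a+b)+1)*(2*x+(a+b)+2) ≠ 0 := mul_ne_zero h1 h2
  have q2 : (2*(x+1)+(a+b)+1)*(2*(x+1)+(a+b)+2) ≠ 0 := mul_ne_zero e3 e4
  have hN : (b - a) * (x+1) / (2*(x+1) + (a+b)) -
        (x+1) * ((b^2 - a^2) / ((2*(x+1) + (a+b)) * (2*(x+1) + (a+b) + 2))) =
      2*(x+1)*(x+2)*(b-a) / ((2*(x+1) + (a+b)) * (2*(x+1) + (a+b) + 2)) := by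
    rw [← mul_div_assoc, div_sub_div _ _ e2 p1, div_eq_div_iff (mul_ne_zero e2 p1) p1]
    ring
  have hD : (2*(x+1)*(x+(a+b)+1) / ((2*x+(a+b)+1)*(2*x+(a+b)+2))) *
       (2*((x+1)+1)*((x+1)+(a+b)+1) / ((2*(x+1)+(a+b)+1)*(2*(x+1)+(a+b)+2))) =
      (4*(x+1)*(x+2)*(x+(a+b)+1)*(x+(a+b)+2)) /
        (((2*x+(a+b)+1)*(2*x+(a+b)+2)) * ((2*(x+1)+(a+b)+1)*(2*(x+1)+(a+b)+2))) := by
    rw [div_mul_div_comm, div_eq_div_iff (mul_ne_zero q1 q2) (mul_ne_zero q1 q2)]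
    ring
  have g1' : (x+1) + (a+b) ≠ 0 := by intro h; exact g1 (by linarith)
  have g2' : (x+1) + (a+b) + 1 ≠ 0 := by intro h; exact g2 (by linarith)
  have hM : (4*(x+1)*(x+2)*(x+(a+b)+1)*(x+(a+b)+2)) ≠ 0 :=
    mul_ne_zero (mul_ne_zero (mul_ne_zero (mul_ne_zero (by norm_num) m1) m2) g1) g2
  rw [hN, hD, div_eq_mul_inv, inv_div, div_mul_div_comm, div_mul_eq_mul_div,
    div_eq_div_iff (mul_ne_zero p1 hM)
      (mul_ne_zero (mul_ne_zero two_ne_zero g1') g2')]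
  ring

theorem jacobi_beta_sum_and_eta
    (a b : ℝ) (ha : -1 < a) (hb : -1 < b) (hab : a + b ≠ 0)
    (αj βj γj : ℕ → ℝ)
    (hαj : ∀ j : ℕ, αj j =
      2 * ((j : ℝ) + 1) * ((j : ℝ) + (a + b) + 1) /
        ((2 * (j : ℝ) + (a + b) + 1) * (2 * (j : ℝ) + (a + b) + 2)))
    (hβj : ∀ j : ℕ, βj j =
      (b ^ 2 - a ^ 2) / ((2 * (j : ℝ) + (a + b)) * (2 * (j : ℝ) + (a + b) + 2)))
    (hγj : ∀ j : ℕ, γj j =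
      2 * ((j : ℝ) + a) * ((j : ℝ) + b) /
        ((2 * (j : ℝ) + (a + b)) * (2 * (j : ℝ) + (a + b) + 1)))
    (P : ℕ → Polynomial ℝ) (η : ℕ → ℕ → ℝ)
    (hP0 : P 0 = 1)
    (hdeg : ∀ j, (P j).natDegree = j)
    (hrec0 : X * P 0 = C (αj 0) * P 1 + C (βj 0) * P 0)
    (hrec : ∀ j, 1 ≤ j → X * P j =
      C (αj j) * P (j + 1) + C (βj j) * P j + C (γj j) * P (j - 1))
    (hη : ∀ j, derivative (P j) = ∑ i ∈ Finset.range j, C (η i j) * P i) :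
    ∀ j : ℕ, 1 ≤ j →
      (∑ i ∈ Finset.range j, βj i = (b - a) * (j : ℝ) / (2 * (j : ℝ) + (a + b)))
      ∧ η (j - 1) (j + 1) =
          ((2 * (j : ℝ) + (a + b)) ^ 2 - 1) /
            (2 * ((j : ℝ) + (a + b)) * ((j : ℝ) + (a + b) + 1)) * (b - a) := by
  have hab2 : (-2 : ℝ) < a + b := by linarith
  -- leading coefficients are nonzero
  have hkne : ∀ j : ℕ, (P j).coeff j ≠ 0 := by
    intro j
    have hne : P j ≠ 0 := by
      intro h0
      rcases Nat.eq_zero_or_pos j with h | h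
      · rw [h, hP0] at h0; exact one_ne_zero h0
      · have hd := hdeg j; rw [h0] at hd; simp at hd; omega
    have h := Polynomial.leadingCoeff_ne_zero.mpr hne
    rwa [Polynomial.leadingCoeff, hdeg j] at h
  have hcz : ∀ i n : ℕ, i < n → (P i).coeff n = 0 := fun i n h =>
    coeff_eq_zero_of_natDegree_lt (by rw [hdeg]; exact h)
  -- leading coefficient recurrence
  have hA : ∀ j : ℕ, (P j).coeff j = αj j * (P (j + 1)).coeff (j + 1) := by
    intro j
    rcases Nat.eq_zero_or_pos j with rfl | h
    · have e := congrArg (fun p => p.coeff 1) hrec0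
      simp only [hP0, coeff_add, coeff_C_mul, Polynomial.coeff_one, mul_one,
        Polynomial.coeff_X_mul, Polynomial.coeff_one_zero] at e
      simp [hP0, Polynomial.coeff_one]
      simpa using e
    · have e := congrArg (fun p => p.coeff (j + 1)) (hrec j h)
      simp only [coeff_add, coeff_C_mul, Polynomial.coeff_X_mul] at e
      rw [hcz j (j + 1) (by omega), hcz (j - 1) (j + 1) (by omega)] at e
      simpa using e
  have hαne : ∀ j : ℕ, αj j ≠ 0 := by
    intro j h
    exact hkne j (by rw [hA j, h, zero_mul])
  have h1 : a + b + 1 ≠ 0 := by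
    intro h
    apply hαne 0
    rw [hαj 0]
    simp only [Nat.cast_zero]
    rw [show (0 : ℝ) + (a + b) + 1 = 0 by linarith, mul_zero, zero_div]
  -- sum formula
  have hsum : ∀ j : ℕ, 1 ≤ j →
      ∑ i ∈ Finset.range j, βj i = (b - a) * (j : ℝ) / (2 * (j : ℝ) + (a + b)) := by
    intro j hj
    induction j with
    | zero => omega
    | succ n ih =>
      rcases Nat.eq_zero_or_pos n with rfl | hn
      · rw [Finset.sum_range_one, hβj 0]
        have h2 : a + b + 2 ≠ 0 := by linarith
        push_cast
        have e1 : 2 * (0 : ℝ) + (a + b) ≠ 0 := by intro h; exact hab (by linarith)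
        have e2 : 2 * (0 : ℝ) + (a + b) + 2 ≠ 0 := by intro h; exact h2 (by linarith)
        have e3 : 2 * (1 : ℝ) + (a + b) ≠ 0 := by intro h; exact h2 (by linarith)
        rw [div_eq_div_iff (mul_ne_zero e1 e2) e3]
        ring
      · rw [Finset.sum_range_succ, ih hn, hβj n]
        have hn' : (1 : ℝ) ≤ (n : ℝ) := by exact_mod_cast hn
        have hd1 : 2 * (n : ℝ) + (a + b) ≠ 0 := by intro h; linarith
        have hd2 : 2 * (n : ℝ) + (a + b) + 2 ≠ 0 := by intro h; linarith
        push_cast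
        have e3 : 2 * ((n : ℝ) + 1) + (a + b) ≠ 0 := by intro h; linarith
        rw [div_add_div _ _ hd1 (mul_ne_zero hd1 hd2),
          div_eq_div_iff (mul_ne_zero hd1 (mul_ne_zero hd1 hd2)) e3]
        ring
  intro j hj
  refine ⟨hsum j hj, ?_⟩
  -- subleading coefficient equation
  have hB0 : αj 0 * (P 1).coeff 0 + βj 0 = 0 := by
    have e := congrArg (fun p => p.coeff 0) hrec0
    simp only [hP0, coeff_add, coeff_C_mul, mul_one, Polynomial.coeff_one_zero,
      Polynomial.mul_coeff_zero, Polynomial.coeff_X_zero, zero_mul] at e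
    simpa using e.symm
  have hB : ∀ m : ℕ, (P (m + 1)).coeff m =
      αj (m + 1) * (P (m + 2)).coeff (m + 1) + βj (m + 1) * (P (m + 1)).coeff (m + 1) := by
    intro m
    have e := congrArg (fun p => p.coeff (m + 1)) (hrec (m + 1) (by omega))
    simp only [coeff_add, coeff_C_mul, Polynomial.coeff_X_mul, Nat.add_sub_cancel] at e
    rw [hcz m (m + 1) (by omega)] at e
    simpa using e
  -- subleading coefficient formula
  have hs : ∀ m : ℕ, (P (m + 1)).coeff m =
      -(∑ i ∈ Finset.range (m + 1), βj i) * (P (m + 1)).coeff (m + 1) := by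
    intro m
    induction m with
    | zero =>
      apply mul_left_cancel₀ (hαne 0)
      have hA0 := hA 0
      rw [hP0] at hA0
      simp only [Polynomial.coeff_one_zero] at hA0
      rw [Finset.sum_range_one]
      linear_combination hB0 - βj 0 * hA0
    | succ n ih =>
      apply mul_left_cancel₀ (hαne (n + 1))
      have hBn := hB n
      have hAn := hA (n + 1)
      rw [Finset.sum_range_succ]
      linear_combination -hBn + ih - (∑ i ∈ Finset.range (n + 1), βj i + βj (n + 1)) * hAn
  -- derivative coefficient equations
  have hη1 : ∀ m : ℕ, η (m + 1) (m + 2) * (P (m + 1)).coeff (m + 1) =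
      ((m : ℝ) + 2) * (P (m + 2)).coeff (m + 2) := by
    intro m
    have e := congrArg (fun p => p.coeff (m + 1)) (hη (m + 2))
    simp only [Polynomial.coeff_derivative, Polynomial.finset_sum_coeff, coeff_C_mul] at e
    rw [Finset.sum_range_succ, Finset.sum_eq_zero
      (fun i hi => by rw [hcz i (m + 1) (Finset.mem_range.mp hi), mul_zero])] at e
    push_cast at e
    linarith [e]
  have hη2 : ∀ m : ℕ, η m (m + 2) * (P m).coeff m =
      ((m : ℝ) + 1) * (P (m + 2)).coeff (m + 1) - η (m + 1) (m + 2) * (P (m + 1)).coeff m := by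
    intro m
    have e := congrArg (fun p => p.coeff m) (hη (m + 2))
    simp only [Polynomial.coeff_derivative, Polynomial.finset_sum_coeff, coeff_C_mul] at e
    rw [Finset.sum_range_succ, Finset.sum_range_succ, Finset.sum_eq_zero
      (fun i hi => by rw [hcz i m (Finset.mem_range.mp hi), mul_zero])] at e
    push_cast at e
    linarith [e]
  -- key identity
  obtain ⟨m, rfl⟩ : ∃ m, j = m + 1 := ⟨j - 1, by omega⟩
  have hkey : η m (m + 2) * (αj m * αj (m + 1)) =
      (∑ i ∈ Finset.range (m + 1), βj i) - ((m : ℝ) + 1) * βj (m + 1) := by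
    apply mul_right_cancel₀ (hkne (m + 2))
    have E1 := hη1 m
    have E2 := hη2 m
    have hAm := hA m
    have hAm1 := hA (m + 1)
    have hs0 := hs m
    have hs1 := hs (m + 1)
    rw [Finset.sum_range_succ] at hs1
    linear_combination E2 - η m (m + 2) * hAm - (η m (m + 2) * αj m) * hAm1 +
      ((m : ℝ) + 1) * hs1 - η (m + 1) (m + 2) * hs0 +
      (∑ i ∈ Finset.range (m + 1), βj i) * E1
  -- finish by field arithmetic
  have hSm := hsum (m + 1) (by omega)
  have hm0 : (0 : ℝ) ≤ (m : ℝ) := Nat.cast_nonneg m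
  have ht1 : 2 * (m : ℝ) + (a + b) + 1 ≠ 0 := by
    rcases Nat.eq_zero_or_pos m with rfl | hm
    · simpa using fun h => h1 (by linarith)
    · have h' : (1 : ℝ) ≤ (m : ℝ) := by exact_mod_cast hm
      intro h; linarith
  have hmg1 : (m : ℝ) + (a + b) + 1 ≠ 0 := by
    rcases Nat.eq_zero_or_pos m with rfl | hm
    · simpa using fun h => h1 (by linarith)
    · have h' : (1 : ℝ) ≤ (m : ℝ) := by exact_mod_cast hm
      intro h; linarith
  have ht2 : 2 * (m : ℝ) + (a + b) + 2 ≠ 0 := by intro h; linarith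
  have ht3 : 2 * (m : ℝ) + (a + b) + 3 ≠ 0 := by intro h; linarith
  have ht4 : 2 * (m : ℝ) + (a + b) + 4 ≠ 0 := by intro h; linarith
  have hmg2 : (m : ℝ) + (a + b) + 2 ≠ 0 := by intro h; linarith
  have hm1 : (m : ℝ) + 1 ≠ 0 := by intro h; linarith
  have hm2 : (m : ℝ) + 2 ≠ 0 := by intro h; linarith
  -- solve for η and substitute
  have hαmne := hαne m
  have hαm1ne := hαne (m + 1)
  have hηval : η m (m + 2) =
      (((∑ i ∈ Finset.range (m + 1), βj i) - ((m : ℝ) + 1) * βj (m + 1))) /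
        (αj m * αj (m + 1)) := by
    rw [eq_div_iff (mul_ne_zero hαmne hαm1ne)]
    exact hkey
  simp only [Nat.add_sub_cancel]
  rw [hηval, hSm, hβj (m + 1), hαj m, hαj (m + 1)]
  push_cast
  exact jacobi_aux a b (m : ℝ) ht1 ht2 ht3 ht4 hmg1 hmg2 hm1 hm2
end
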